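/- Let A₄ be the free abelian group on generators α₁, α₂, α₃, β, let B = A₄/⟨β²α₁⁻¹α₂⁻¹α₃⁻¹⟩, and let B_d ⊂ B be the subgroup generated by α₁α₃⁻¹ and α₂α₃⁻¹. Then ℂ[B]/(α₁α₂α₃ − 1) is isomorphic as a ℂ[B_d]-module to the free module of rank 6 with basis 1, α₁, α₁α₂, β, α₁β, α₁α₂β. -/

import Mathlib

noncomputable section

/-- The BCC lattice group B = A₄ / ⟨β²α₁⁻¹α₂⁻¹α₃⁻¹⟩, written multiplicatively. -/
abbrev BCCGroup : Type :=
  Multiplicative ((ℤ × ℤ × ℤ × ℤ) ⧸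
    AddSubgroup.closure {((-1 : ℤ), (-1 : ℤ), (-1 : ℤ), (2 : ℤ))})

/-- The images in B of the generators α₁, α₂, α₃, β of A₄. -/
def bccGen (j : Fin 4) : BCCGroup :=
  Multiplicative.ofAdd (QuotientAddGroup.mk
    (match j with
      | 0 => ((1 : ℤ), (0 : ℤ), (0 : ℤ), (0 : ℤ))
      | 1 => ((0 : ℤ), (1 : ℤ), (0 : ℤ), (0 : ℤ))
      | 2 => ((0 : ℤ), (0 : ℤ), (1 : ℤ), (0 : ℤ))
      | 3 => ((0 : ℤ), (0 : ℤ), (0 : ℤ), (1 : ℤ))))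

/-- The subgroup B_d = ⟨α₁α₃⁻¹, α₂α₃⁻¹⟩ of B. -/
def BCCd : Subgroup BCCGroup :=
  Subgroup.closure {bccGen 0 * (bccGen 2)⁻¹, bccGen 1 * (bccGen 2)⁻¹}

/-- The quotient ring ℂ[B]/(α₁α₂α₃ − 1). -/
abbrev RBCC : Type :=
  MonoidAlgebra ℂ BCCGroup ⧸
    Ideal.span {(MonoidAlgebra.of ℂ BCCGroup) (bccGen 0 * bccGen 1 * bccGen 2) - 1}

/-- ℂ[B_d] → ℂ[B] → ℂ[B]/(α₁α₂α₃ − 1). -/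
def φBCC : MonoidAlgebra ℂ BCCd →+* RBCC :=
  (Ideal.Quotient.mk _).comp (MonoidAlgebra.mapDomainRingHom ℂ BCCd.subtype)

/-- The six basis elements 1, α₁, α₁α₂, β, α₁β, α₁α₂β in the quotient ring. -/
def bccBasis (i : Fin 6) : RBCC :=
  Ideal.Quotient.mk _ ((MonoidAlgebra.of ℂ BCCGroup)
    (match i with
      | 0 => 1
      | 1 => bccGen 0
      | 2 => bccGen 0 * bccGen 1
      | 3 => bccGen 3
      | 4 => bccGen 0 * bccGen 3
      | 5 => bccGen 0 * bccGen 1 * bccGen 3))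

/-!
The homomorphism `level : B → ℤ` with α₁, α₂, α₃ ↦ -2 and β ↦ -3 is well defined, since it kills
β²α₁⁻¹α₂⁻¹α₃⁻¹. Its kernel is exactly B_d, it sends g = α₁α₂α₃ to -6, and it sends the six basis
monomials bᵢ to 0, -2, -4, -3, -5, -7, one in each residue class mod 6. Hence every element of B
is uniquely h gᵗ bᵢ with h ∈ B_d and t ∈ ℤ, so ℂ[B] is free over ℂ[B_d × gᶻ] on the bᵢ, and
dividing out g - 1 leaves a free ℂ[B_d]-module on their images. The inverse map sends a group
element h gᵗ bᵢ to h in the i-th coordinate, forgetting t.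
-/

namespace MonoidAlgebra

open Function

variable {k G ι : Type*} [CommRing k] [CommGroup G] {H : Subgroup G} {g : G} {b : ι → G}

lemma mk_of_zpow_eq_one (t : ℤ) :
    Ideal.Quotient.mk (Ideal.span {of k G g - 1}) (of k G (g ^ t)) = 1 := by
  let f : G →* k[G] ⧸ Ideal.span {of k G g - 1} :=
    (Ideal.Quotient.mk (Ideal.span {of k G g - 1}) : k[G] →* _).comp (of k G)
  have hg : f.toHomUnits g = 1 := Units.ext (Ideal.Quotient.eq.2 (Ideal.subset_span rfl))
  have := congrArg Units.val (map_zpow f.toHomUnits g t)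
  rwa [hg, one_zpow, Units.val_one, MonoidHom.coe_toHomUnits] at this

namespace CosetDecomposition

variable (hdec : Bijective fun p : H × ℤ × ι => (p.1 : G) * g ^ p.2.1 * b p.2.2)

def decompose : G ≃ H × ℤ × ι := (Equiv.ofBijective _ hdec).symm

lemma decompose_symm_apply (p : H × ℤ × ι) :
    (decompose hdec).symm p = p.1 * g ^ p.2.1 * b p.2.2 :=
  rfl

lemma decompose_spec (x : G) :
    ((decompose hdec x).1 : G) * g ^ (decompose hdec x).2.1 * b (decompose hdec x).2.2 = x := by
  rw [← decompose_symm_apply hdec, Equiv.symm_apply_apply]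

lemma decompose_mul_self (x : G) :
    decompose hdec (x * g) =
      ((decompose hdec x).1, (decompose hdec x).2.1 + 1, (decompose hdec x).2.2) := by
  rw [← Equiv.eq_symm_apply, decompose_symm_apply, zpow_add_one]
  nth_rw 1 [← decompose_spec hdec x]
  ac_rfl

lemma decompose_mul_rep (h : H) (i : ι) : decompose hdec (h * b i) = (h, 0, i) := by
  rw [← Equiv.eq_symm_apply, decompose_symm_apply, zpow_zero, mul_one]

section Coeffs

variable [DecidableEq ι]

def coeffs : k[G] →+ (ι → k[H]) :=
  (Finsupp.liftAddHom fun x =>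
    (AddMonoidHom.single _ (decompose hdec x).2.2).comp (singleAddHom (decompose hdec x).1)).comp
    coeffAddEquiv.toAddMonoidHom

lemma coeffs_single (x : G) (c : k) :
    coeffs hdec (single x c) =
      Pi.single (decompose hdec x).2.2 (single (decompose hdec x).1 c) := by
  simp [coeffs]

lemma coeffs_mul_of (a : k[G]) : coeffs hdec (a * of k G g) = coeffs hdec a := by
  induction a using MonoidAlgebra.induction_linear with
  | zero => rw [zero_mul]
  | add a a' ha ha' => rw [add_mul, map_add, map_add, ha, ha']
  | single x c =>
    rw [of_apply, single_mul_single, mul_one, coeffs_single, coeffs_single,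
      decompose_mul_self]

lemma coeffs_eq_zero_of_mem {a : k[G]} (ha : a ∈ Ideal.span {of k G g - 1}) :
    coeffs hdec a = 0 := by
  obtain ⟨a, rfl⟩ := Ideal.mem_span_singleton'.mp ha
  rw [mul_sub, mul_one, map_sub, coeffs_mul_of, sub_self]

end Coeffs

section Combine

variable [Fintype ι]

def combine (b : ι → G) (f : ι → k[H]) : k[G] :=
  ∑ i, mapDomainRingHom k H.subtype (f i) * of k G (b i)

lemma combine_add (f f' : ι → k[H]) : combine b (f + f') = combine b f + combine b f' := by
  simp only [combine, Pi.add_apply, map_add, add_mul, Finset.sum_add_distrib]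

variable [DecidableEq ι]

lemma combine_single (i : ι) (h : H) (c : k) :
    combine b (Pi.single i (single h c)) = single (h * b i) c := by
  rw [combine, Finset.sum_eq_single i
    (fun j _ hj => by rw [Pi.single_eq_of_ne hj, map_zero, zero_mul])
    (fun hi => absurd (Finset.mem_univ i) hi), Pi.single_eq_same, mapDomainRingHom_apply,
    mapDomain_single, of_apply, single_mul_single, mul_one]
  rfl

lemma coeffs_combine (f : ι → k[H]) : coeffs hdec (combine b f) = f := by
  have hsingle (i : ι) (a : k[H]) :
      coeffs hdec (mapDomainRingHom k H.subtype a * of k G (b i)) = Pi.single i a := by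
    induction a using MonoidAlgebra.induction_linear with
    | zero => rw [map_zero, zero_mul, map_zero, Pi.single_zero]
    | add a a' ha ha' => rw [map_add, add_mul, map_add, ha, ha', Pi.single_add]
    | single h c =>
      rw [mapDomainRingHom_apply, mapDomain_single, of_apply, single_mul_single, mul_one,
        show H.subtype h * b i = h * b i from rfl, coeffs_single, decompose_mul_rep]
  simp only [combine, map_sum, hsingle, Finset.univ_sum_single]

lemma mk_combine_coeffs (a : k[G]) :
    Ideal.Quotient.mk (Ideal.span {of k G g - 1}) (combine b (coeffs hdec a)) =
      Ideal.Quotient.mk _ a := by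
  induction a using MonoidAlgebra.induction_linear with
  | zero => simp [combine]
  | add a a' ha ha' => rw [map_add, combine_add, map_add, ha, ha', map_add]
  | single x c =>
    have hx : single x c = single ((decompose hdec x).1 * b (decompose hdec x).2.2) c *
        of k G (g ^ (decompose hdec x).2.1) := by
      rw [of_apply, single_mul_single, mul_one, mul_right_comm, decompose_spec]
    rw [coeffs_single, combine_single, hx, map_mul, mk_of_zpow_eq_one, mul_one]

end Combine

end CosetDecomposition

open CosetDecomposition in
theorem bijective_sum_mk_mul_of_bijective_mul_zpow_mul [Fintype ι]
    (hdec : Bijective fun p : H × ℤ × ι => (p.1 : G) * g ^ p.2.1 * b p.2.2) :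
    Bijective fun f : ι → k[H] =>
      ∑ i, (Ideal.Quotient.mk (Ideal.span {of k G g - 1})).comp (mapDomainRingHom k H.subtype)
        (f i) * Ideal.Quotient.mk _ (of k G (b i)) := by
  classical
  have hcombine (f : ι → k[H]) :
      ∑ i, (Ideal.Quotient.mk (Ideal.span {of k G g - 1})).comp (mapDomainRingHom k H.subtype)
        (f i) * Ideal.Quotient.mk _ (of k G (b i)) = Ideal.Quotient.mk _ (combine b f) := by
    simp only [combine, map_sum, map_mul, RingHom.comp_apply]
  simp only [hcombine]
  refine ⟨fun f f' hff' => ?_, fun y => ?_⟩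
  · have := coeffs_eq_zero_of_mem hdec (Ideal.Quotient.eq.1 hff')
    rwa [map_sub, coeffs_combine, coeffs_combine, sub_eq_zero] at this
  · obtain ⟨a, rfl⟩ := Ideal.Quotient.mk_surjective y
    exact ⟨coeffs hdec a, mk_combine_coeffs hdec a⟩

end MonoidAlgebra

namespace BCC

open Function

def levelA4 : ℤ × ℤ × ℤ × ℤ →+ ℤ :=
  AddMonoidHom.mk' (fun p => -2 * p.1 - 2 * p.2.1 - 2 * p.2.2.1 - 3 * p.2.2.2)
    (fun _ _ => by simp only [Prod.fst_add, Prod.snd_add]; ring)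

def level : BCCGroup →* Multiplicative ℤ :=
  AddMonoidHom.toMultiplicative <| QuotientAddGroup.lift _ levelA4 <|
    (AddSubgroup.closure_le _).2 <| Set.singleton_subset_iff.2 rfl

lemma BCCd_eq_ker : BCCd = level.ker := by
  refine le_antisymm ((Subgroup.closure_le _).2 ?_) fun x hx => ?_
  · rintro _ (rfl | rfl) <;> rfl
  · obtain ⟨⟨a, b, c, d⟩, hp⟩ := QuotientAddGroup.mk_surjective (Multiplicative.toAdd x)
    rw [← ofAdd_toAdd x, ← hp] at hx ⊢
    have hlevel : -2 * a - 2 * b - 2 * c - 3 * d = 0 := hx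
    obtain ⟨e, rfl⟩ : 2 ∣ d := by omega
    have hgens : Multiplicative.ofAdd (QuotientAddGroup.mk (a, b, c, 2 * e)) =
        (bccGen 0 * (bccGen 2)⁻¹) ^ (a + e) * (bccGen 1 * (bccGen 2)⁻¹) ^ (b + e) := by
      simp only [bccGen, ← ofAdd_neg, ← ofAdd_add, ← ofAdd_zsmul, ← QuotientAddGroup.mk_neg,
        ← QuotientAddGroup.mk_add, ← QuotientAddGroup.mk_zsmul]
      rw [Multiplicative.ofAdd.injective.eq_iff, QuotientAddGroup.eq,
        AddSubgroup.mem_closure_singleton]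
      exact ⟨-e, by ext <;> simp <;> omega⟩
    rw [hgens]
    exact mul_mem (zpow_mem (Subgroup.subset_closure (.inl rfl)) _)
      (zpow_mem (Subgroup.subset_closure (.inr rfl)) _)

def rep (i : Fin 6) : BCCGroup :=
  match i with
  | 0 => 1
  | 1 => bccGen 0
  | 2 => bccGen 0 * bccGen 1
  | 3 => bccGen 3
  | 4 => bccGen 0 * bccGen 3
  | 5 => bccGen 0 * bccGen 1 * bccGen 3

lemma bijective_intCast_level_rep :
    Bijective fun i => ((Multiplicative.toAdd (level (rep i)) : ℤ) : ZMod 6) := by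
  decide

def alphaProd : BCCGroup := bccGen 0 * bccGen 1 * bccGen 2

lemma toAdd_level_alphaProd : Multiplicative.toAdd (level alphaProd) = -6 := rfl

lemma toAdd_level_decomposition {h : BCCGroup} (hh : h ∈ BCCd) (t : ℤ) (i : Fin 6) :
    Multiplicative.toAdd (level (h * alphaProd ^ t * rep i)) =
      -6 * t + Multiplicative.toAdd (level (rep i)) := by
  rw [BCCd_eq_ker, MonoidHom.mem_ker] at hh
  simp only [map_mul, map_zpow, hh, toAdd_mul, toAdd_zpow, toAdd_one, toAdd_level_alphaProd,
    smul_eq_mul]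
  ring

theorem bijective_decomposition :
    Bijective fun p : BCCd × ℤ × Fin 6 =>
      (p.1 : BCCGroup) * alphaProd ^ p.2.1 * rep p.2.2 := by
  refine ⟨fun ⟨h, t, i⟩ ⟨h', t', j⟩ heq => ?_, fun x => ?_⟩
  · have hlevel := congrArg (fun x => Multiplicative.toAdd (level x)) heq
    simp only [toAdd_level_decomposition h.2, toAdd_level_decomposition h'.2] at hlevel
    obtain rfl : i = j := bijective_intCast_level_rep.1 <|
      (ZMod.intCast_eq_intCast_iff_dvd_sub _ _ 6).2 ⟨t' - t, by push_cast; linarith⟩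
    obtain rfl : t = t' := by omega
    dsimp only at heq
    rw [mul_left_inj, mul_left_inj] at heq
    exact Prod.ext (Subtype.ext heq) rfl
  · obtain ⟨i, hi⟩ :=
      bijective_intCast_level_rep.2 ((Multiplicative.toAdd (level x) : ℤ) : ZMod 6)
    obtain ⟨q, hq⟩ := (ZMod.intCast_eq_intCast_iff_dvd_sub _ _ 6).1 hi
    set y := alphaProd ^ (-q) * rep i
    refine ⟨⟨⟨x * y⁻¹, ?_⟩, -q, i⟩, by simp [y, mul_assoc]⟩
    rw [BCCd_eq_ker, MonoidHom.mem_ker]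
    apply Multiplicative.toAdd.injective
    simp only [y, map_mul, map_inv, map_zpow, toAdd_mul, toAdd_inv, toAdd_zpow,
      toAdd_level_alphaProd, smul_eq_mul, toAdd_one]
    push_cast at hq
    linarith

end BCC

/-- ℂ[B]/(α₁α₂α₃ − 1) is a free ℂ[B_d]-module of rank 6 with basis
1, α₁, α₁α₂, β, α₁β, α₁α₂β: the explicit ℂ[B_d]-linear map is bijective. -/
theorem BCC_module_decomposition :
    Function.Bijective
      (fun f : Fin 6 → MonoidAlgebra ℂ BCCd =>
        (∑ i : Fin 6, φBCC (f i) * bccBasis i : RBCC)) := by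
  have hbasis :
      bccBasis = fun i => Ideal.Quotient.mk _ (MonoidAlgebra.of ℂ BCCGroup (BCC.rep i)) := by
    funext i
    fin_cases i <;> rfl
  rw [hbasis]
  exact MonoidAlgebra.bijective_sum_mk_mul_of_bijective_mul_zpow_mul BCC.bijective_decomposition

end
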